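/- Let λ₊ = θ₀/(2(1−α)). Then λ₊ ∈ (0,1) and there exists a constant C > 0 such that: for every sign sequence η : ℕ → {−1,+1}, every sequence (u_k)_{k≥0} with 2|u_k|(1−α) ≤ θ₀ and u_k = S_{η_k}(u_{k+1}) for all k ≥ 0, and every n ≥ 1, the Euclidean norm of the vector (B_{η_{n−1}} · B_{η_{n−2}} · ⋯ · B_{η_0})·(u₀, 1)ᵀ is at most C · λ₊ⁿ · ‖(u₀, 1)‖. -/

import Mathlib

/-!
The vectors `(u_k, 1)` form an invariant line field for the inverse derivatives:
`u_k = S_{η_k}(u_{k+1})` says exactly that `B_{η_k} (u_k, 1) = u_k (u_{k+1}, 1)`. Hence the product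
`B_{η_{n-1}} ⋯ B_{η_0}` maps `(u_0, 1)` to `(u_0 ⋯ u_{n-1}) (u_n, 1)`, and the bound
`2|u_k|(1-α) ≤ θ₀` is `|u_k| ≤ λ₊`, so the norm is at most `λ₊ⁿ √(1 + λ₊²) ≤ √2 λ₊ⁿ ‖(u₀, 1)‖`.
-/

noncomputable section

/-- `θ₀ = α − √(α² + 2α − 2)`. -/
def theta0 (α : ℝ) : ℝ := α - Real.sqrt (α ^ 2 + 2 * α - 2)

/-- The Möbius map `S_η(u) = η/(2u(1−α) + 2α)` acting on unstable directions. -/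
def Smap (α η u : ℝ) : ℝ := η / (2 * u * (1 - α) + 2 * α)

/-- The inverse derivative matrix `B_ε`: rows `(−α/(1−α), ε/(2(1−α)))` and `(1, 0)`. -/
def Bmat (α ε : ℝ) : Matrix (Fin 2) (Fin 2) ℝ :=
  !![-α / (1 - α), ε / (2 * (1 - α)); 1, 0]

/-- `Bprod α η n = B_{η(n−1)} · B_{η(n−2)} · ⋯ · B_{η 0}`. -/
def Bprod (α : ℝ) (η : ℕ → ℝ) : ℕ → Matrix (Fin 2) (Fin 2) ℝ
  | 0 => 1
  | n + 1 => Bmat α (η n) * Bprod α η n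

/-- Euclidean norm of a vector in `ℝ²`. -/
def eNorm (x : Fin 2 → ℝ) : ℝ := Real.sqrt (x 0 ^ 2 + x 1 ^ 2)

theorem theta0_le (α : ℝ) : theta0 α ≤ α :=
  sub_le_self _ (Real.sqrt_nonneg _)

theorem theta0_pos {α : ℝ} (hα : 0 < α) (hα1 : α < 1) : 0 < theta0 α := by
  rw [theta0, sub_pos, Real.sqrt_lt' hα]
  linarith

theorem theta0_lt_two_mul_one_sub {α : ℝ} (hα : 3 / 4 < α) (hα1 : α < 1) :
    theta0 α < 2 * (1 - α) := by
  -- `(3α - 2)² < α² + 2α - 2` is `(4α - 3)(α - 1) < 0`.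
  have h : 3 * α - 2 < Real.sqrt (α ^ 2 + 2 * α - 2) :=
    Real.lt_sqrt_of_sq_lt (by nlinarith)
  rw [theta0]
  linarith

theorem Smap_denom_pos_of_two_mul_abs_le {α u : ℝ} (hα : 0 < α) (hα1 : α ≤ 1)
    (hu : 2 * |u| * (1 - α) ≤ theta0 α) : 0 < 2 * u * (1 - α) + 2 * α := by
  nlinarith [neg_abs_le u, theta0_le α]

theorem Bmat_mulVec_Smap {α ε v : ℝ} (hα : α ≠ 1) (hv : 2 * v * (1 - α) + 2 * α ≠ 0) :
    (Bmat α ε).mulVec ![Smap α ε v, 1] = Smap α ε v • ![v, 1] := by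
  have h1α : 1 - α ≠ 0 := sub_ne_zero.mpr hα.symm
  have hS : Smap α ε v * (2 * v * (1 - α) + 2 * α) = ε := div_mul_cancel₀ ε hv
  ext i
  fin_cases i
  · simp only [Matrix.mulVec, dotProduct, Bmat, Fin.zero_eta, Fin.isValue, Matrix.of_apply,
      Matrix.cons_val', Matrix.cons_val_fin_one, Matrix.cons_val_zero, Fin.sum_univ_two,
      Matrix.cons_val_one, mul_one, Pi.smul_apply, smul_eq_mul]
    field_simp
    linear_combination -hS
  · simp [Bmat, Matrix.mulVec, dotProduct, Fin.sum_univ_two]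

theorem Bprod_mulVec_eq_prod_smul {α : ℝ} {η u : ℕ → ℝ}
    (hstep : ∀ k, (Bmat α (η k)).mulVec ![u k, 1] = u k • ![u (k + 1), 1]) (n : ℕ) :
    (Bprod α η n).mulVec ![u 0, 1] = (∏ k ∈ Finset.range n, u k) • ![u n, 1] := by
  induction n with
  | zero => simp [Bprod]
  | succ n ih =>
    rw [Bprod, ← Matrix.mulVec_mulVec, ih, Matrix.mulVec_smul, hstep, smul_smul,
      Finset.prod_range_succ]

theorem eNorm_smul (c : ℝ) (x : Fin 2 → ℝ) : eNorm (c • x) = |c| * eNorm x := by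
  simp only [eNorm, Pi.smul_apply, smul_eq_mul]
  rw [show (c * x 0) ^ 2 + (c * x 1) ^ 2 = c ^ 2 * (x 0 ^ 2 + x 1 ^ 2) by ring,
    Real.sqrt_mul (sq_nonneg c), Real.sqrt_sq_eq_abs]

theorem one_le_eNorm_vec_one (x : ℝ) : 1 ≤ eNorm ![x, 1] := by
  simp only [eNorm, Matrix.cons_val_zero, Matrix.cons_val_one]
  exact Real.one_le_sqrt.mpr (by nlinarith [sq_nonneg x])

theorem eNorm_vec_one_le_sqrt_two {x : ℝ} (hx : |x| ≤ 1) : eNorm ![x, 1] ≤ Real.sqrt 2 := by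
  simp only [eNorm, Matrix.cons_val_zero, Matrix.cons_val_one]
  apply Real.sqrt_le_sqrt
  nlinarith [sq_abs x, abs_nonneg x]

/-- with `λ₊ = θ₀/(2(1−α))` one has `λ₊ ∈ (0,1)`, and there is `C > 0` such
that for every sign sequence `η`, every backward-invariant sequence `(u_k)` with
`2|u_k|(1−α) ≤ θ₀` and `u_k = S_{η_k}(u_{k+1})`, and every `n ≥ 1`,
`‖B_{η_{n−1}}⋯B_{η_0}·(u₀, 1)ᵀ‖ ≤ C·λ₊ⁿ·‖(u₀, 1)‖`. -/
theorem statement5 (α : ℝ) (hα : α ∈ Set.Ioo (3/4 : ℝ) 1) :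
    (0 < theta0 α / (2 * (1 - α)) ∧ theta0 α / (2 * (1 - α)) < 1) ∧
    ∃ C > (0 : ℝ), ∀ η : ℕ → ℝ, (∀ k, η k = 1 ∨ η k = -1) →
      ∀ u : ℕ → ℝ, (∀ k, 2 * |u k| * (1 - α) ≤ theta0 α) →
        (∀ k, u k = Smap α (η k) (u (k + 1))) →
        ∀ n : ℕ, 1 ≤ n →
          eNorm ((Bprod α η n).mulVec ![u 0, 1]) ≤
            C * (theta0 α / (2 * (1 - α))) ^ n * eNorm ![u 0, 1] := by
  obtain ⟨hα34, hα1⟩ := hα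
  have hα0 : 0 < α := by linarith
  have h2 : 0 < 2 * (1 - α) := by linarith
  set lam := theta0 α / (2 * (1 - α))
  have hlam0 : 0 < lam := div_pos (theta0_pos hα0 hα1) h2
  have hlam1 : lam < 1 := (div_lt_one h2).mpr (theta0_lt_two_mul_one_sub hα34 hα1)
  refine ⟨⟨hlam0, hlam1⟩, Real.sqrt 2, by positivity, fun η _ u hu hS n _ => ?_⟩
  have hu_le : ∀ k, |u k| ≤ lam := fun k => (le_div_iff₀ h2).mpr (by linarith [hu k])
  have hstep : ∀ k, (Bmat α (η k)).mulVec ![u k, 1] = u k • ![u (k + 1), 1] := fun k => by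
    rw [hS k]
    exact Bmat_mulVec_Smap hα1.ne
      (Smap_denom_pos_of_two_mul_abs_le hα0 hα1.le (hu (k + 1))).ne'
  have hprod : |∏ k ∈ Finset.range n, u k| ≤ lam ^ n := by
    rw [Finset.abs_prod, ← Finset.card_range n, ← Finset.prod_const, Finset.card_range]
    exact Finset.prod_le_prod (fun k _ => abs_nonneg _) (fun k _ => hu_le k)
  rw [Bprod_mulVec_eq_prod_smul hstep, eNorm_smul]
  calc |∏ k ∈ Finset.range n, u k| * eNorm ![u n, 1]
      ≤ lam ^ n * Real.sqrt 2 :=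
        mul_le_mul hprod (eNorm_vec_one_le_sqrt_two ((hu_le n).trans hlam1.le))
          (zero_le_one.trans (one_le_eNorm_vec_one _)) (pow_nonneg hlam0.le n)
    _ ≤ Real.sqrt 2 * lam ^ n * eNorm ![u 0, 1] := by
        rw [mul_comm (lam ^ n)]
        exact le_mul_of_one_le_right (by positivity) (one_le_eNorm_vec_one _)
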